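/- Partition the space of n × m real matrices with entries in [0,1] into open cells indexed by pairs (a partition of the nm entries into d nonempty classes, a total order on the classes), where a matrix lies in the cell if entries are equal exactly when they are in the same class and the common values are ordered according to the chosen order. Then each generalized diagonal subspace (the set of matrices in which the rows indexed by some fixed equivalence relation on {1,…,n} coincide) is a union of closures of these cells, and the symmetric group Σ_n acting by permuting rows acts freely on the set of cells lying outside the fat diagonal (the union of all generalized diagonals). -/

import Mathlib

/-!
A matrix of the cube lies in the cell of its own equality-and-order pattern. All matrices of
that cell share its equalities, so the cell lies in every generalized diagonal containing the
matrix, and so does its closure since generalized diagonals are closed.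

For freeness, if permuting rows by `σ` maps a cell `c` to itself then, looking at one matrix
of the cell, the labellings `c` and `c ∘ σ⁻¹` induce the same strict order on the entries.
Counting the entries below a given one shows that the labellings then agree, so `σ` fixes
the rows of that matrix; off the fat diagonal these rows are distinct, hence `σ = 1`.
-/

namespace Stmt10

/-- The cube of `n × m` matrices with entries in `[0,1]`. -/
def Cube (n m : ℕ) : Set (Fin n → Fin m → ℝ) :=
  {A | ∀ i j, A i j ∈ Set.Icc (0 : ℝ) 1}

/-- The open cell indexed by a labelling `c` of the `nm` entries by `d` (ordered)
equivalence classes: a matrix lies in the cell iff its entries are obtained from a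
strictly increasing list `w` of `d` values in `[0,1]` via `A i j = w (c (i,j))`; thus
two entries are equal exactly when they are in the same class, and the common values
are ordered according to the chosen total order on the classes. -/
def Cell (n m d : ℕ) (c : Fin n × Fin m → Fin d) : Set (Fin n → Fin m → ℝ) :=
  {A | ∃ w : Fin d → ℝ, StrictMono w ∧ (∀ k, w k ∈ Set.Icc (0 : ℝ) 1) ∧
    ∀ i j, A i j = w (c (i, j))}

/-- The generalized diagonal attached to an equivalence relation on the rows: the set
of matrices in the cube in which equivalent rows coincide. -/
def GenDiag (n m : ℕ) (r : Setoid (Fin n)) : Set (Fin n → Fin m → ℝ) :=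
  {A | A ∈ Cube n m ∧ ∀ i i', r.r i i' → A i = A i'}

/-- The fat diagonal: the union of the generalized diagonals over all nontrivial
equivalence relations, i.e. the matrices in the cube having two equal rows. -/
def FatDiag (n m : ℕ) : Set (Fin n → Fin m → ℝ) :=
  {A | A ∈ Cube n m ∧ ∃ i i', i ≠ i' ∧ A i = A i'}

/-- The action of a permutation of the rows on cell labels. -/
def permCell (n m d : ℕ) (σ : Equiv.Perm (Fin n)) (c : Fin n × Fin m → Fin d) :
    Fin n × Fin m → Fin d :=
  fun p => c (σ⁻¹ p.1, p.2)

open Finset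

section Labelling

variable {α β : Type*} [Fintype α] [LinearOrder β]

theorem exists_surjective_strictMono_factorization (f : α → β) :
    ∃ (d : ℕ) (c : α → Fin d) (w : Fin d → β),
      Function.Surjective c ∧ StrictMono w ∧ ∀ p, f p = w (c p) := by
  classical
  set s := univ.image f
  have hmem : ∀ p, f p ∈ s := fun p => mem_image_of_mem f (mem_univ p)
  let e := s.orderIsoOfFin rfl
  refine ⟨#s, fun p => e.symm ⟨f p, hmem p⟩, fun k => e k, ?_, ?_, ?_⟩
  · intro k
    obtain ⟨p, -, hp⟩ := mem_image.mp (e k).2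
    exact ⟨p, by simp only [hp, Subtype.coe_eta, OrderIso.symm_apply_apply]⟩
  · exact fun k k' hkk' => e.strictMono hkk'
  · simp

theorem comp_perm_eq_of_lt_iff_lt (c : α → β) (τ : Equiv.Perm α)
    (h : ∀ p q, c (τ p) < c (τ q) ↔ c p < c q) : c ∘ τ = c := by
  classical
  let below : β → ℕ := fun x => #{q | c q < x}
  have below_comp : ∀ p, below (c (τ p)) = below (c p) := fun p =>
    calc #{q | c q < c (τ p)} = #{q | c (τ q) < c (τ p)} := (card_equiv τ (by simp)).symm
      _ = #{q | c q < c p} := by simp only [h]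
  have below_strictMono : ∀ p p', c p < c p' → below (c p) < below (c p') :=
    fun p p' hpp' => card_lt_card <|
      (ssubset_iff_of_subset fun q => by simpa using fun hq : c q < c p => hq.trans hpp').mpr
        ⟨p, by simpa using hpp'⟩
  funext p
  rcases lt_trichotomy (c (τ p)) (c p) with hlt | heq | hgt
  · exact absurd (below_comp p) (below_strictMono _ _ hlt).ne
  · exact heq
  · exact absurd (below_comp p) (below_strictMono _ _ hgt).ne'

end Labelling

theorem exists_strictMono_mem_Icc (d : ℕ) :
    ∃ w : Fin d → ℝ, StrictMono w ∧ ∀ k, w k ∈ Set.Icc (0 : ℝ) 1 := by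
  refine ⟨fun k => k / (d + 1), fun k k' hkk' => ?_, fun k => ⟨by positivity, ?_⟩⟩
  · exact div_lt_div_of_pos_right (by exact_mod_cast hkk') (by positivity)
  · rw [div_le_one (by positivity)]
    exact_mod_cast k.2.le.trans d.le_succ

variable {n m d : ℕ}

theorem isClosed_genDiag (r : Setoid (Fin n)) : IsClosed (GenDiag n m r) := by
  simp only [GenDiag, Cube, Set.ofPred_and, Set.ofPred_forall]
  exact (isClosed_iInter fun i => isClosed_iInter fun j =>
      isClosed_Icc.preimage (by fun_prop)).inter
    (isClosed_iInter fun i => isClosed_iInter fun i' => isClosed_iInter fun _ =>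
      isClosed_eq (by fun_prop) (by fun_prop))

theorem cell_subset_cube (c : Fin n × Fin m → Fin d) : Cell n m d c ⊆ Cube n m := by
  rintro A ⟨w, -, hw, hA⟩ i j
  exact hA i j ▸ hw _

theorem exists_surjective_mem_cell {A : Fin n → Fin m → ℝ} (hA : A ∈ Cube n m) :
    ∃ (d : ℕ) (c : Fin n × Fin m → Fin d), Function.Surjective c ∧ A ∈ Cell n m d c := by
  obtain ⟨d, c, w, hc, hw, hAw⟩ :=
    exists_surjective_strictMono_factorization fun p : Fin n × Fin m => A p.1 p.2
  refine ⟨d, c, hc, w, hw, fun k => ?_, fun i j => hAw (i, j)⟩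
  obtain ⟨p, rfl⟩ := hc k
  exact hAw p ▸ hA p.1 p.2

theorem cell_subset_genDiag {r : Setoid (Fin n)} {c : Fin n × Fin m → Fin d}
    {A : Fin n → Fin m → ℝ} (hAr : A ∈ GenDiag n m r) (hAc : A ∈ Cell n m d c) :
    Cell n m d c ⊆ GenDiag n m r := by
  obtain ⟨w, hw, -, hA⟩ := hAc
  intro B hB
  refine ⟨cell_subset_cube c hB, fun i i' hii' => funext fun j => ?_⟩
  obtain ⟨w', -, -, hB'⟩ := hB
  have hc : c (i, j) = c (i', j) := hw.injective <| by rw [← hA, ← hA, hAr.2 i i' hii']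
  rw [hB', hB', hc]

theorem permCell_eq_of_cell_eq {σ : Equiv.Perm (Fin n)} {c : Fin n × Fin m → Fin d}
    (h : Cell n m d (permCell n m d σ c) = Cell n m d c) : permCell n m d σ c = c := by
  obtain ⟨w, hw, hwI⟩ := exists_strictMono_mem_Icc d
  have hA : (fun i j => w (c (i, j))) ∈ Cell n m d (permCell n m d σ c) :=
    h ▸ ⟨w, hw, hwI, fun _ _ => rfl⟩
  obtain ⟨w', hw', -, hA'⟩ := hA
  replace hA' : ∀ i j, w (c (i, j)) = w' (c (σ⁻¹ i, j)) := hA'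
  refine comp_perm_eq_of_lt_iff_lt c (σ⁻¹.prodCongr (Equiv.refl _)) fun p q => ?_
  change c (σ⁻¹ p.1, p.2) < c (σ⁻¹ q.1, q.2) ↔ c p < c q
  rw [← hw'.lt_iff_lt, ← hA', ← hA', hw.lt_iff_lt]

/-- Each generalized diagonal is a union of closures of cells, and the symmetric group
`Σ_n`, acting by permuting rows, acts freely on the cells lying outside the fat
diagonal. -/
theorem genDiag_union_of_cell_closures_and_free_action_off_fat_diagonal (n m : ℕ) :
    (∀ r : Setoid (Fin n),
      GenDiag n m r =
        ⋃ p : {p : Σ d : ℕ, Fin n × Fin m → Fin d //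
            Function.Surjective p.2 ∧ closure (Cell n m p.1 p.2) ⊆ GenDiag n m r},
          closure (Cell n m p.1.1 p.1.2)) ∧
    (∀ (d : ℕ) (c : Fin n × Fin m → Fin d) (σ : Equiv.Perm (Fin n)),
      Disjoint (Cell n m d c) (FatDiag n m) →
      Cell n m d (permCell n m d σ c) = Cell n m d c → σ = 1) := by
  refine ⟨fun r => Set.Subset.antisymm (fun A hA => ?_) ?_, fun d c σ hdisj hcell => ?_⟩
  · obtain ⟨d, c, hc, hAc⟩ := exists_surjective_mem_cell hA.1
    have hsub := (isClosed_genDiag r).closure_subset_iff.mpr (cell_subset_genDiag hA hAc)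
    exact Set.mem_iUnion.mpr ⟨⟨⟨d, c⟩, hc, hsub⟩, subset_closure hAc⟩
  · exact Set.iUnion_subset fun p => p.2.2
  · obtain ⟨w, hw, hwI⟩ := exists_strictMono_mem_Icc d
    have hAc : (fun i j => w (c (i, j))) ∈ Cell n m d c := ⟨w, hw, hwI, fun _ _ => rfl⟩
    have hfix : ∀ i, σ⁻¹ i = i := fun i => by_contra fun hne =>
      Set.disjoint_left.mp hdisj hAc ⟨cell_subset_cube c hAc, σ⁻¹ i, i, hne,
        funext fun j => congrArg w (congrFun (permCell_eq_of_cell_eq hcell) (i, j))⟩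
    exact inv_eq_one.mp (Equiv.ext hfix)

end Stmt10
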